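/- If n ≥ 4, then any permutation of [n] in which all even values precede all odd values requires at least ⌊n/2⌋ cut-and-paste moves to sort into the identity permutation. -/

import Mathlib

/-- A cut-and-paste move: cut out a contiguous substring `M`, optionally
reverse it, and paste it back at any position of the remaining string. -/
def IsMove (l l' : List ℕ) : Prop :=
  ∃ P M S X Y : List ℕ, l = P ++ M ++ S ∧ X ++ Y = P ++ S ∧
    (l' = X ++ M ++ Y ∨ l' = X ++ M.reverse ++ Y)

/-- `MoveSeq k l l'` : `l` can be transformed into `l'` by exactly `k`
cut-and-paste moves. -/
inductive MoveSeq : ℕ → List ℕ → List ℕ → Prop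
  | refl (l : List ℕ) : MoveSeq 0 l l
  | step {k : ℕ} {l l' l'' : List ℕ} :
      IsMove l l' → MoveSeq k l' l'' → MoveSeq (k + 1) l l''

/-- Number of parity adjacencies: consecutive pairs of opposite parity. -/
def parityAdj (l : List ℕ) : ℕ :=
  (l.zip l.tail).countP (fun p => p.1 % 2 != p.2 % 2)

/-- Number of adjacencies: consecutive pairs whose values differ by 1. -/
def adjCount (l : List ℕ) : ℕ :=
  (l.zip l.tail).countP (fun p => (p.1 + 1 == p.2) || (p.2 + 1 == p.1))

lemma pa_nil : parityAdj [] = 0 := rfl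
lemma pa_single (a : ℕ) : parityAdj [a] = 0 := rfl

lemma pa_cons_cons (a b : ℕ) (l : List ℕ) :
    parityAdj (a :: b :: l) = parityAdj (b :: l) + (if a % 2 = b % 2 then 0 else 1) := by
  simp only [parityAdj, List.tail_cons, List.zip_cons_cons, List.countP_cons]
  by_cases h : a % 2 = b % 2 <;> simp [h]

lemma pa_split : ∀ (A : List ℕ) (b : ℕ) (B : List ℕ),
    parityAdj (A ++ b :: B) = parityAdj (A ++ [b]) + parityAdj (b :: B)
  | [], b, B => by simp [pa_single]
  | [a], b, B => by
      simp only [List.cons_append, List.nil_append]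
      rw [pa_cons_cons, pa_cons_cons a b []]
      simp [pa_single]; omega
  | a :: a' :: A, b, B => by
      have ih := pa_split (a' :: A) b B
      simp only [List.cons_append] at ih ⊢
      rw [pa_cons_cons, pa_cons_cons a a' (A ++ [b])]
      omega

lemma pa_snoc_bounds : ∀ (l : List ℕ) (b : ℕ),
    parityAdj l ≤ parityAdj (l ++ [b]) ∧ parityAdj (l ++ [b]) ≤ parityAdj l + 1
  | [], b => by simp [pa_nil, pa_single]
  | [a], b => by
      simp only [List.cons_append, List.nil_append]
      rw [pa_cons_cons]
      simp [pa_single]; split <;> omega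
  | a :: a' :: l, b => by
      have ih := pa_snoc_bounds (a' :: l) b
      simp only [List.cons_append] at ih ⊢
      rw [pa_cons_cons a a' (l ++ [b]), pa_cons_cons a a' l]
      omega

lemma pa_subadd (A B : List ℕ) : parityAdj (A ++ B) ≤ parityAdj A + parityAdj B + 1 := by
  cases B with
  | nil => simp [pa_nil]
  | cons b B' =>
      rw [pa_split]
      have := (pa_snoc_bounds A b).2
      omega

lemma pa_superadd (A B : List ℕ) : parityAdj A + parityAdj B ≤ parityAdj (A ++ B) := by
  cases B with
  | nil => simp [pa_nil]
  | cons b B' =>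
      rw [pa_split]
      have := (pa_snoc_bounds A b).1
      omega

lemma pa_reverse : ∀ l : List ℕ, parityAdj l.reverse = parityAdj l
  | [] => rfl
  | [a] => rfl
  | a :: b :: t => by
      have ih := pa_reverse (b :: t)
      have h1 : (a :: b :: t).reverse = (b :: t).reverse ++ [a] := by simp
      have h2 : (b :: t).reverse = t.reverse ++ [b] := by simp
      rw [h1, h2, List.append_assoc]
      rw [show ([b] ++ [a] : List ℕ) = b :: [a] from rfl]
      rw [pa_split t.reverse b [a], ← h2, ih]
      rw [pa_cons_cons a b t, pa_cons_cons b a []]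
      simp only [pa_single]
      have : (if a % 2 = b % 2 then (0:ℕ) else 1) = (if b % 2 = a % 2 then 0 else 1) := by
        by_cases h : a % 2 = b % 2
        · simp [h]
        · simp [h, Ne.symm h]
      omega

lemma pa_parity : ∀ (l : List ℕ) (a b : ℕ),
    parityAdj (a :: l ++ [b]) % 2 = (a + b) % 2
  | [], a, b => by
      rw [show a :: [] ++ [b] = a :: b :: [] from rfl, pa_cons_cons]
      simp only [pa_single]
      split <;> omega
  | c :: t, a, b => by
      have ih := pa_parity t c b
      simp only [List.cons_append] at ih ⊢
      rw [pa_cons_cons a c (t ++ [b])]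
      split <;> omega

lemma pa_const_parity (r : ℕ) : ∀ l : List ℕ, (∀ x ∈ l, x % 2 = r) → parityAdj l = 0
  | [] , _ => rfl
  | [a], _ => rfl
  | a :: b :: t, h => by
      have ih := pa_const_parity r (b :: t) (fun x hx => h x (List.mem_cons_of_mem a hx))
      rw [pa_cons_cons, ih]
      have ha := h a (by simp)
      have hb := h b (by simp)
      simp [ha, hb]

lemma pa_range' : ∀ (m a : ℕ), parityAdj (List.range' a (m + 1)) = m
  | 0, a => by simp [pa_single]
  | m + 1, a => by
      have ih := pa_range' m (a + 1)
      rw [List.range'_succ, List.range'_succ, pa_cons_cons, ← List.range'_succ, ih]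
      have : ¬ a % 2 = (a + 1) % 2 := by omega
      simp [this]

lemma move_bound {l l' : List ℕ} (a t : ℕ) (h : IsMove l l') :
    parityAdj (a :: l' ++ [t]) ≤ parityAdj (a :: l ++ [t]) + 2 := by
  obtain ⟨P, M, S, X, Y, hl, hXY, hl'⟩ := h
  have key : ∀ M'' : List ℕ, parityAdj M'' = parityAdj M →
      parityAdj (a :: (X ++ M'' ++ Y) ++ [t]) ≤ parityAdj (a :: l ++ [t]) + 3 := by
    intro M'' hM''
    have e1 : a :: (X ++ M'' ++ Y) ++ [t] = (a :: X) ++ (M'' ++ (Y ++ [t])) := by simp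
    have e2 : (a :: X) ++ (Y ++ [t]) = (a :: P) ++ (S ++ [t]) := by
      simp only [List.cons_append, ← List.append_assoc, hXY]
    have e3 : a :: l ++ [t] = (a :: P) ++ (M ++ (S ++ [t])) := by simp [hl]
    have s1 : parityAdj (a :: (X ++ M'' ++ Y) ++ [t]) ≤
        parityAdj (a :: X) + parityAdj (M'' ++ (Y ++ [t])) + 1 := by
      rw [e1]; exact pa_subadd _ _
    have s2 : parityAdj (M'' ++ (Y ++ [t])) ≤ parityAdj M + parityAdj (Y ++ [t]) + 1 := by
      have := pa_subadd M'' (Y ++ [t]); omega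
    have s3 : parityAdj (a :: X) + parityAdj (Y ++ [t]) ≤
        parityAdj ((a :: P) ++ (S ++ [t])) := by
      rw [← e2]; exact pa_superadd _ _
    have s5 : parityAdj ((a :: P) ++ (S ++ [t])) ≤
        parityAdj (a :: P) + parityAdj (S ++ [t]) + 1 := pa_subadd _ _
    have s6 : parityAdj (a :: P) + parityAdj (M ++ (S ++ [t])) ≤
        parityAdj (a :: l ++ [t]) := by
      rw [e3]; exact pa_superadd _ _
    have s7 : parityAdj M + parityAdj (S ++ [t]) ≤ parityAdj (M ++ (S ++ [t])) :=
      pa_superadd _ _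
    omega
  have hb : parityAdj (a :: l' ++ [t]) ≤ parityAdj (a :: l ++ [t]) + 3 := by
    rcases hl' with h' | h'
    · rw [h']; exact key M rfl
    · rw [h']; exact key M.reverse (pa_reverse M)
  have p1 := pa_parity l' a t
  have p2 := pa_parity l a t
  omega

lemma moveseq_bound (c : ℕ) : ∀ {k : ℕ} {u v : List ℕ}, MoveSeq k u v →
    parityAdj (0 :: v ++ [c]) ≤ parityAdj (0 :: u ++ [c]) + 2 * k := by
  intro k u v hs
  induction hs with
  | refl l => omega
  | step hm _ ih =>
      have := move_bound 0 c hm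
      omega

/-- For `n ≥ 4`, a permutation of `[n]` with all even values before all odd
values requires at least `⌊n/2⌋` cut-and-paste moves to sort. -/
theorem evens_before_odds_lower_bound (n : ℕ) (hn : 4 ≤ n) (e o : List ℕ)
    (he : ∀ x ∈ e, x % 2 = 0) (ho : ∀ x ∈ o, x % 2 = 1)
    (hperm : (e ++ o).Perm (List.range' 1 n)) :
    ∀ k : ℕ, MoveSeq k (e ++ o) (List.range' 1 n) → n / 2 ≤ k := by
  intro k hk
  have hmb := moveseq_bound (n + 1) hk
  -- final potential is n + 1
  have hfin : parityAdj (0 :: List.range' 1 n ++ [n + 1]) = n + 1 := by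
    have h1 : (0 :: List.range' 1 n ++ [n + 1] : List ℕ) = List.range' 0 (n + 2) := by
      rw [List.range'_concat (s := 0) (n := n + 1), List.range'_succ]
      simp
    rw [h1, pa_range']
  -- initial potential is at most 2
  have hstart : parityAdj (0 :: (e ++ o) ++ [n + 1]) ≤ 2 := by
    have hE : parityAdj (0 :: e) = 0 := by
      apply pa_const_parity 0
      intro x hx
      rcases List.mem_cons.mp hx with h | h
      · simp [h]
      · exact he x h
    have hO : parityAdj o = 0 := pa_const_parity 1 o ho
    have hO1 : parityAdj (o ++ [n + 1]) ≤ 1 := by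
      have := pa_subadd o [n + 1]
      rw [hO, pa_single] at this
      omega
    have heq : (0 :: (e ++ o) ++ [n + 1] : List ℕ) = (0 :: e) ++ (o ++ [n + 1]) := by
      simp
    rw [heq]
    have := pa_subadd (0 :: e) (o ++ [n + 1])
    omega
  rw [hfin] at hmb
  omega
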